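/- arXiv:2604.02253 — 2 statements merged into one kernel-verified Lean document; each statement's English description precedes it below -/
import Mathlib

section
/- Let M_u ∈ ℝ^{n_u×n_u}, M_z ∈ ℝ^{n_z×n_z}, W_u ∈ ℝ^{n_u×n_u}, W_z ∈ ℝ^{n_z×n_z} be symmetric positive definite and z̃, z_1, …, z_N ∈ ℝ^{n_z}. Define A_ℓ = (I_{n_u}, I_{n_u} ⊗ z_ℓᵀM_z) ∈ ℝ^{n_u×n_θ} with n_θ = n_u(n_z+1), and let W_θ = [[W_u, W_u ⊗ z̃ᵀM_z], [W_u ⊗ M_z z̃, W_u ⊗ (W_z + M_z z̃ z̃ᵀ M_z)]]. Then W_θ is invertible and, for all 1 ≤ ℓ, m ≤ N, A_ℓ W_θ^{-1} A_mᵀ = (1 + (z_ℓ − z̃)ᵀ M_z W_z^{-1} M_z (z_m − z̃)) · W_u^{-1}. Consequently, for the stacked matrix A = (A_1; …; A_N) ∈ ℝ^{n_u N×n_θ}, one has A W_θ^{-1} Aᵀ = G ⊗ W_u^{-1}, where G = e eᵀ + (Z − z̃eᵀ)ᵀ M_z W_z^{-1} M_z (Z − z̃eᵀ) ∈ ℝ^{N×N},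 Z = (z_1 ⋯ z_N) ∈ ℝ^{n_z×N}, and e ∈ ℝ^N is the vector of ones. -/
open Matrix
open scoped Kronecker

/-- `Wu ⊗ vᵀ` : the Kronecker product of `Wu` with a row vector `vᵀ`
(the trivial row index is suppressed). -/
def kronRow {nu nz : ℕ} (Wu : Matrix (Fin nu) (Fin nu) ℝ) (v : Fin nz → ℝ) :
    Matrix (Fin nu) (Fin nu × Fin nz) ℝ :=
  Matrix.of fun i p => Wu i p.1 * v p.2

/-- `Wu ⊗ v` : the Kronecker product of `Wu` with a column vector `v`
(the trivial column index is suppressed). -/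
def kronCol {nu nz : ℕ} (Wu : Matrix (Fin nu) (Fin nu) ℝ) (v : Fin nz → ℝ) :
    Matrix (Fin nu × Fin nz) (Fin nu) ℝ :=
  Matrix.of fun p i => Wu p.1 i * v p.2

/-- The prior precision matrix
`Wθ = [[Wu, Wu ⊗ z̃ᵀMz], [Wu ⊗ Mz z̃, Wu ⊗ (Wz + Mz z̃ z̃ᵀ Mz)]]`,
acting on `ℝ^{nu} ⊕ ℝ^{nu × nz} ≅ ℝ^{nu(nz+1)}`. -/
noncomputable def Wtheta {nu nz : ℕ} (Wu : Matrix (Fin nu) (Fin nu) ℝ)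
    (Wz Mz : Matrix (Fin nz) (Fin nz) ℝ) (zt : Fin nz → ℝ) :
    Matrix (Fin nu ⊕ Fin nu × Fin nz) (Fin nu ⊕ Fin nu × Fin nz) ℝ :=
  Matrix.fromBlocks Wu (kronRow Wu (zt ᵥ* Mz)) (kronCol Wu (Mz *ᵥ zt))
    (Wu ⊗ₖ (Wz + Matrix.vecMulVec (Mz *ᵥ zt) (zt ᵥ* Mz)))

/-- The discrepancy forward operator `A(z) = (I_{nu}, I_{nu} ⊗ zᵀMz)`. -/
noncomputable def Aop {nu nz : ℕ} (Mz : Matrix (Fin nz) (Fin nz) ℝ) (z : Fin nz → ℝ) :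
    Matrix (Fin nu) (Fin nu ⊕ Fin nu × Fin nz) ℝ :=
  Matrix.of fun i q =>
    Sum.elim (fun i' => (1 : Matrix (Fin nu) (Fin nu) ℝ) i i')
      (fun p => (1 : Matrix (Fin nu) (Fin nu) ℝ) i p.1 * (z ᵥ* Mz) p.2) q

/-- The vertical stacking `A = (A_1; …; A_N)` of the forward operators `A_ℓ = A(z_ℓ)`. -/
noncomputable def Astack {nu nz N : ℕ} (Mz : Matrix (Fin nz) (Fin nz) ℝ)
    (z : Fin N → Fin nz → ℝ) :
    Matrix (Fin N × Fin nu) (Fin nu ⊕ Fin nu × Fin nz) ℝ :=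
  Matrix.of fun p q => Aop Mz (z p.1) p.2 q

/-- The data matrix `Z = (z_1 ⋯ z_N)` whose columns are the design points. -/
def Zmat {nz N : ℕ} (z : Fin N → Fin nz → ℝ) : Matrix (Fin nz) (Fin N) ℝ :=
  Matrix.of fun i ℓ => z ℓ i

/-- The Gram matrix `G = e eᵀ + (Z − z̃eᵀ)ᵀ Mz Wz⁻¹ Mz (Z − z̃eᵀ)`. -/
noncomputable def Gmat {nz N : ℕ} (Mz Wz : Matrix (Fin nz) (Fin nz) ℝ)
    (zt : Fin nz → ℝ) (z : Fin N → Fin nz → ℝ) : Matrix (Fin N) (Fin N) ℝ :=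
  Matrix.vecMulVec (fun _ => 1) (fun _ => 1) +
    (Zmat z - Matrix.of fun i (_ : Fin N) => zt i)ᵀ * (Mz * Wz⁻¹ * Mz) *
      (Zmat z - Matrix.of fun i (_ : Fin N) => zt i)

/-!
Eliminating the first block row of `Wθ` leaves the Schur complement
`Wu ⊗ (Wz + Mz z̃ z̃ᵀ Mz) - (Wu ⊗ Mz z̃) Wu⁻¹ (Wu ⊗ z̃ᵀ Mz) = Wu ⊗ Wz`, so `Wθ⁻¹` is explicit:
`[[(1 + z̃ᵀ Mz Wz⁻¹ Mz z̃) Wu⁻¹, -Wu⁻¹ ⊗ z̃ᵀ Mz Wz⁻¹], [-Wu⁻¹ ⊗ Wz⁻¹ Mz z̃, Wu⁻¹ ⊗ Wz⁻¹]]`.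
Sandwiching it between `A_ℓ` and `A_mᵀ`, every block is a multiple of `Wu⁻¹`, and the four
scalars combine into `1 + (Mzᵀ(z_ℓ - z̃))ᵀ Wz⁻¹ (Mzᵀ z_m - Mz z̃)`, which is the claimed
coefficient once `Mz` is symmetric. The stacked identity is this one read blockwise.
-/

section KroneckerVector

variable {nu nz : ℕ}

lemma kronRow_transpose (P : Matrix (Fin nu) (Fin nu) ℝ) (v : Fin nz → ℝ) :
    (kronRow P v)ᵀ = kronCol Pᵀ v := by
  ext p i
  simp [kronRow, kronCol]

lemma mul_kronRow (M P : Matrix (Fin nu) (Fin nu) ℝ) (v : Fin nz → ℝ) :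
    M * kronRow P v = kronRow (M * P) v := by
  ext i p
  simp only [mul_apply, kronRow, of_apply, Finset.sum_mul]
  exact Finset.sum_congr rfl fun _ _ => by ring

lemma kronCol_mul (P M : Matrix (Fin nu) (Fin nu) ℝ) (v : Fin nz → ℝ) :
    kronCol P v * M = kronCol (P * M) v := by
  ext p j
  simp only [mul_apply, kronCol, of_apply, Finset.sum_mul]
  exact Finset.sum_congr rfl fun _ _ => by ring

lemma kronRow_mul_kronecker (P Q : Matrix (Fin nu) (Fin nu) ℝ) (v : Fin nz → ℝ)
    (R : Matrix (Fin nz) (Fin nz) ℝ) :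
    kronRow P v * (Q ⊗ₖ R) = kronRow (P * Q) (v ᵥ* R) := by
  ext i p
  simp only [mul_apply, kronRow, of_apply, kroneckerMap_apply, vecMul, dotProduct,
    Fintype.sum_prod_type, Finset.sum_mul, Finset.mul_sum]
  rw [Finset.sum_comm]
  exact Finset.sum_congr rfl fun _ _ => Finset.sum_congr rfl fun _ _ => by ring

lemma kronecker_mul_kronCol (Q P : Matrix (Fin nu) (Fin nu) ℝ) (w : Fin nz → ℝ)
    (R : Matrix (Fin nz) (Fin nz) ℝ) :
    (Q ⊗ₖ R) * kronCol P w = kronCol (Q * P) (R *ᵥ w) := by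
  ext p j
  simp only [mul_apply, kronCol, of_apply, kroneckerMap_apply, mulVec, dotProduct,
    Fintype.sum_prod_type, Finset.sum_mul, Finset.mul_sum]
  rw [Finset.sum_comm]
  exact Finset.sum_congr rfl fun _ _ => Finset.sum_congr rfl fun _ _ => by ring

lemma kronRow_mul_kronCol (P Q : Matrix (Fin nu) (Fin nu) ℝ) (v w : Fin nz → ℝ) :
    kronRow P v * kronCol Q w = (v ⬝ᵥ w) • (P * Q) := by
  ext i j
  simp only [mul_apply, kronRow, kronCol, of_apply, Matrix.smul_apply, dotProduct,
    Fintype.sum_prod_type, Finset.sum_mul, Finset.mul_sum, smul_eq_mul]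
  exact Finset.sum_congr rfl fun _ _ => Finset.sum_congr rfl fun _ _ => by ring

lemma kronCol_mul_kronRow (P Q : Matrix (Fin nu) (Fin nu) ℝ) (v w : Fin nz → ℝ) :
    kronCol P v * kronRow Q w = (P * Q) ⊗ₖ vecMulVec v w := by
  ext p q
  simp only [mul_apply, kronRow, kronCol, of_apply, kroneckerMap_apply, vecMulVec_apply,
    Finset.sum_mul]
  exact Finset.sum_congr rfl fun _ _ => by ring

lemma kronCol_add_smul (P : Matrix (Fin nu) (Fin nu) ℝ) (v w : Fin nz → ℝ) (a : ℝ) :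
    kronCol P (v + a • w) = kronCol P v + a • kronCol P w := by
  ext p j
  simp only [kronCol, of_apply, Matrix.add_apply, Matrix.smul_apply, Pi.add_apply, Pi.smul_apply,
    smul_eq_mul]
  ring

end KroneckerVector

section PriorPrecision

variable {nu nz : ℕ} (Wu : Matrix (Fin nu) (Fin nu) ℝ) (Wz Mz : Matrix (Fin nz) (Fin nz) ℝ)
  (zt : Fin nz → ℝ)

noncomputable def WthetaInv :
    Matrix (Fin nu ⊕ Fin nu × Fin nz) (Fin nu ⊕ Fin nu × Fin nz) ℝ :=
  fromBlocks ((1 + (zt ᵥ* Mz) ⬝ᵥ (Wz⁻¹ *ᵥ (Mz *ᵥ zt))) • Wu⁻¹)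
    (-kronRow Wu⁻¹ ((zt ᵥ* Mz) ᵥ* Wz⁻¹))
    (-kronCol Wu⁻¹ (Wz⁻¹ *ᵥ (Mz *ᵥ zt)))
    (Wu⁻¹ ⊗ₖ Wz⁻¹)

variable {Wu Wz}

lemma Wtheta_mul_WthetaInv (hWu : IsUnit Wu.det) (hWz : IsUnit Wz.det) :
    Wtheta Wu Wz Mz zt * WthetaInv Wu Wz Mz zt = 1 := by
  have hWu' : Wu * Wu⁻¹ = 1 := mul_nonsing_inv Wu hWu
  have hWz' : Wz * Wz⁻¹ = 1 := mul_nonsing_inv Wz hWz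
  set s := Wz⁻¹ *ᵥ (Mz *ᵥ zt)
  set c := (zt ᵥ* Mz) ⬝ᵥ s
  have h11 : Wu * ((1 + c) • Wu⁻¹) + kronRow Wu (zt ᵥ* Mz) * -kronCol Wu⁻¹ s = 1 := by
    rw [Matrix.mul_neg, kronRow_mul_kronCol, Matrix.mul_smul, hWu', add_smul, one_smul]
    abel
  have h12 : Wu * -kronRow Wu⁻¹ ((zt ᵥ* Mz) ᵥ* Wz⁻¹) +
      kronRow Wu (zt ᵥ* Mz) * (Wu⁻¹ ⊗ₖ Wz⁻¹) = 0 := by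
    rw [Matrix.mul_neg, mul_kronRow, hWu', kronRow_mul_kronecker, hWu', neg_add_cancel]
  have h21 : kronCol Wu (Mz *ᵥ zt) * ((1 + c) • Wu⁻¹) +
      (Wu ⊗ₖ (Wz + vecMulVec (Mz *ᵥ zt) (zt ᵥ* Mz))) * -kronCol Wu⁻¹ s = 0 := by
    have hs : (Wz + vecMulVec (Mz *ᵥ zt) (zt ᵥ* Mz)) *ᵥ s = Mz *ᵥ zt + c • (Mz *ᵥ zt) := by
      rw [add_mulVec, vecMulVec_mulVec, op_smul_eq_smul, mulVec_mulVec, hWz', one_mulVec]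
    rw [Matrix.mul_neg, Matrix.mul_smul, kronCol_mul, hWu', kronecker_mul_kronCol, hWu', hs,
      kronCol_add_smul, add_smul, one_smul]
    abel
  have h22 : kronCol Wu (Mz *ᵥ zt) * -kronRow Wu⁻¹ ((zt ᵥ* Mz) ᵥ* Wz⁻¹) +
      (Wu ⊗ₖ (Wz + vecMulVec (Mz *ᵥ zt) (zt ᵥ* Mz))) * (Wu⁻¹ ⊗ₖ Wz⁻¹) = 1 := by
    rw [Matrix.mul_neg, kronCol_mul_kronRow, hWu', ← mul_kronecker_mul, hWu', add_mul, hWz',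
      vecMulVec_mul, kronecker_add, one_kronecker_one]
    abel
  rw [Wtheta, WthetaInv, fromBlocks_multiply, h11, h12, h21, h22, fromBlocks_one]

lemma isUnit_det_Wtheta (hWu : IsUnit Wu.det) (hWz : IsUnit Wz.det) :
    IsUnit (Wtheta Wu Wz Mz zt).det :=
  isUnit_det_of_right_inverse (Wtheta_mul_WthetaInv Mz zt hWu hWz)

lemma inv_Wtheta (hWu : IsUnit Wu.det) (hWz : IsUnit Wz.det) :
    (Wtheta Wu Wz Mz zt)⁻¹ = WthetaInv Wu Wz Mz zt :=
  inv_eq_right_inv (Wtheta_mul_WthetaInv Mz zt hWu hWz)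

end PriorPrecision

lemma Aop_eq_fromCols {nu nz : ℕ} (Mz : Matrix (Fin nz) (Fin nz) ℝ) (z : Fin nz → ℝ) :
    (Aop Mz z : Matrix (Fin nu) _ ℝ) = fromCols 1 (kronRow 1 (z ᵥ* Mz)) := rfl

lemma Aop_mul_WthetaInv_mul_transpose {nu nz : ℕ} (Wu : Matrix (Fin nu) (Fin nu) ℝ)
    (Wz Mz : Matrix (Fin nz) (Fin nz) ℝ) (zt a b : Fin nz → ℝ) :
    Aop (nu := nu) Mz a * WthetaInv Wu Wz Mz zt * (Aop (nu := nu) Mz b)ᵀ =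
      (1 + (a - zt) ⬝ᵥ (Mz *ᵥ (Wz⁻¹ *ᵥ (b ᵥ* Mz - Mz *ᵥ zt)))) • Wu⁻¹ := by
  rw [Aop_eq_fromCols, Aop_eq_fromCols, transpose_fromCols, transpose_one, kronRow_transpose,
    transpose_one, WthetaInv, fromCols_mul_fromBlocks, fromCols_mul_fromRows]
  simp only [Matrix.one_mul, Matrix.mul_one, Matrix.mul_neg, Matrix.add_mul, Matrix.neg_mul,
    kronRow_mul_kronecker, kronRow_mul_kronCol, sub_vecMul, mulVec_sub, sub_dotProduct,
    dotProduct_sub, dotProduct_mulVec]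
  module

lemma transpose_mul_mul_apply {m n R : Type*} [Fintype m] [CommSemiring R]
    (A : Matrix m n R) (K : Matrix m m R) (i j : n) :
    (Aᵀ * K * A) i j = (fun k => A k i) ⬝ᵥ (K *ᵥ fun k => A k j) := by
  simp only [mul_apply, transpose_apply, dotProduct, mulVec, Finset.mul_sum, Finset.sum_mul]
  rw [Finset.sum_comm]
  exact Finset.sum_congr rfl fun _ _ => Finset.sum_congr rfl fun _ _ => by ring

lemma Gmat_apply {nz N : ℕ} (Mz Wz : Matrix (Fin nz) (Fin nz) ℝ) (zt : Fin nz → ℝ)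
    (z : Fin N → Fin nz → ℝ) (ℓ m : Fin N) :
    Gmat Mz Wz zt z ℓ m = 1 + (z ℓ - zt) ⬝ᵥ (Mz *ᵥ (Wz⁻¹ *ᵥ (Mz *ᵥ (z m - zt)))) := by
  rw [Gmat, Matrix.add_apply, vecMulVec_apply, one_mul, transpose_mul_mul_apply, mulVec_mulVec,
    mulVec_mulVec]
  rfl

lemma Astack_mul_mul_transpose_apply {nu nz N : ℕ} (Mz : Matrix (Fin nz) (Fin nz) ℝ)
    (z : Fin N → Fin nz → ℝ) (P : Matrix (Fin nu ⊕ Fin nu × Fin nz) (Fin nu ⊕ Fin nu × Fin nz) ℝ)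
    (ℓ m : Fin N) (i j : Fin nu) :
    (Astack (nu := nu) Mz z * P * (Astack (nu := nu) Mz z)ᵀ) (ℓ, i) (m, j) =
      (Aop (nu := nu) Mz (z ℓ) * P * (Aop (nu := nu) Mz (z m))ᵀ) i j := rfl

theorem stacked_forward_prior_product_general
    {nu nz N : ℕ}
    (Wu : Matrix (Fin nu) (Fin nu) ℝ) (Mz Wz : Matrix (Fin nz) (Fin nz) ℝ)
    (hWu : Wu.PosDef) (hMz : Mz.PosDef) (hWz : Wz.PosDef)
    (zt : Fin nz → ℝ) (z : Fin N → Fin nz → ℝ) :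
    IsUnit (Wtheta Wu Wz Mz zt).det ∧
    (∀ ℓ m : Fin N,
      Aop (nu := nu) Mz (z ℓ) * (Wtheta Wu Wz Mz zt)⁻¹ * (Aop (nu := nu) Mz (z m))ᵀ
        = (1 + (z ℓ - zt) ⬝ᵥ (Mz *ᵥ (Wz⁻¹ *ᵥ (Mz *ᵥ (z m - zt))))) • Wu⁻¹) ∧
    Astack (nu := nu) Mz z * (Wtheta Wu Wz Mz zt)⁻¹ * (Astack (nu := nu) Mz z)ᵀ
      = Gmat Mz Wz zt z ⊗ₖ Wu⁻¹ := by
  have hWu' : IsUnit Wu.det := hWu.isUnit.map detMonoidHom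
  have hWz' : IsUnit Wz.det := hWz.isUnit.map detMonoidHom
  have hMz_symm : ∀ x : Fin nz → ℝ, x ᵥ* Mz = Mz *ᵥ x := fun x => by
    rw [← vecMul_transpose, ← conjTranspose_eq_transpose_of_trivial, hMz.1]
  have hblock : ∀ ℓ m : Fin N,
      Aop (nu := nu) Mz (z ℓ) * (Wtheta Wu Wz Mz zt)⁻¹ * (Aop (nu := nu) Mz (z m))ᵀ
        = (1 + (z ℓ - zt) ⬝ᵥ (Mz *ᵥ (Wz⁻¹ *ᵥ (Mz *ᵥ (z m - zt))))) • Wu⁻¹ := by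
    intro ℓ m
    rw [inv_Wtheta Mz zt hWu' hWz', Aop_mul_WthetaInv_mul_transpose, hMz_symm, ← mulVec_sub]
  refine ⟨isUnit_det_Wtheta Mz zt hWu' hWz', hblock, ?_⟩
  ext ⟨ℓ, i⟩ ⟨m, j⟩
  rw [Astack_mul_mul_transpose_apply, hblock, kroneckerMap_apply, Gmat_apply, Matrix.smul_apply,
    smul_eq_mul]

/-- The prior precision `Wθ` is invertible,
`A_ℓ Wθ⁻¹ A_mᵀ = (1 + (z_ℓ − z̃)ᵀ Mz Wz⁻¹ Mz (z_m − z̃)) Wu⁻¹` for all `ℓ, m`, and the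
stacked forward operator satisfies `A Wθ⁻¹ Aᵀ = G ⊗ Wu⁻¹`. -/
theorem stacked_forward_prior_product
    {nu nz N : ℕ}
    (Mu Wu : Matrix (Fin nu) (Fin nu) ℝ) (Mz Wz : Matrix (Fin nz) (Fin nz) ℝ)
    (hMu : Mu.PosDef) (hWu : Wu.PosDef) (hMz : Mz.PosDef) (hWz : Wz.PosDef)
    (zt : Fin nz → ℝ) (z : Fin N → Fin nz → ℝ) :
    IsUnit (Wtheta Wu Wz Mz zt).det ∧
    (∀ ℓ m : Fin N,
      Aop (nu := nu) Mz (z ℓ) * (Wtheta Wu Wz Mz zt)⁻¹ * (Aop (nu := nu) Mz (z m))ᵀ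
        = (1 + (z ℓ - zt) ⬝ᵥ (Mz *ᵥ (Wz⁻¹ *ᵥ (Mz *ᵥ (z m - zt))))) • Wu⁻¹) ∧
    Astack (nu := nu) Mz z * (Wtheta Wu Wz Mz zt)⁻¹ * (Astack (nu := nu) Mz z)ᵀ
      = Gmat Mz Wz zt z ⊗ₖ Wu⁻¹ :=
  stacked_forward_prior_product_general Wu Mz Wz hWu hMz hWz zt z
end

section
/- Let M_u, W_u ∈ ℝ^{n_u×n_u} and M_z, W_z ∈ ℝ^{n_z×n_z} be symmetric positive definite, z̃, z_1, …, z_N ∈ ℝ^{n_z}, Z = (z_1 ⋯ z_N), e ∈ ℝ^N the vector of ones, and G = e eᵀ + (Z − z̃eᵀ)ᵀ M_z W_z^{-1} M_z (Z − z̃eᵀ). Suppose {g_i}_{i=1}^N are orthonormal eigenvectors of G with eigenvalues μ_i > 0, and {x_j}_{j=1}^{n_u} satisfy W_u x_j = λ_j M_u x_j with λ_j > 0 and x_jᵀ M_u x_{j'} = δ_{jj'}. Define y_i = Z g_i − (eᵀg_i) z̃, s_i = eᵀg_i − y_iᵀ M_z W_z^{-1} M_z z̃, and ψ_{i,j} =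 (1/√(μ_i λ_j)) (s_i x_j ; x_j ⊗ W_z^{-1} M_z y_i). Then, with W_θ the block prior precision matrix [[W_u, W_u ⊗ z̃ᵀM_z], [W_u ⊗ M_z z̃, W_u ⊗ (W_z + M_z z̃ z̃ᵀ M_z)]], the vectors ψ_{i,j} are W_θ-orthonormal: ψ_{i,j}ᵀ W_θ ψ_{i',j'} = δ_{ii'} δ_{jj'} for all i, i' ∈ {1,…,N} and j, j' ∈ {1,…,n_u}. -/
/-!
For vectors of the form `(a x ; x ⊗ w)` the form `ψᵀ Wθ ψ'` factors as `xᵀ Wu x'` times a scalar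
depending only on `a, w, a', w'`. For `w = Wz⁻¹ Mz y` and `a = s` that scalar is
`(eᵀg)(eᵀg') + yᵀ Mz Wz⁻¹ Mz y' = gᵀ G g'`. The eigenvector relations then turn the two factors
into `λ_j δ_{jj'}` and `μ_i δ_{ii'}`, which the normalization `1/√(μ_i λ_j)` cancels.
-/

open Matrix
open scoped Kronecker

section KroneckerVec

variable {l m n p R : Type*} [Fintype m] [Fintype n] [CommSemiring R]

theorem dotProduct_kroneckerVec (x a : m → R) (w b : n → R) :
    (fun q : m × n => x q.1 * w q.2) ⬝ᵥ (fun q => a q.1 * b q.2) = (x ⬝ᵥ a) * (w ⬝ᵥ b) := by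
  simp only [dotProduct, Fintype.sum_prod_type, Finset.sum_mul_sum]
  exact Finset.sum_congr rfl fun _ _ => Finset.sum_congr rfl fun _ _ => by ring

theorem kronecker_mulVec_kroneckerVec (A : Matrix l m R) (B : Matrix p n R) (x : m → R)
    (w : n → R) :
    (A ⊗ₖ B) *ᵥ (fun q => x q.1 * w q.2) = fun q => (A *ᵥ x) q.1 * (B *ᵥ w) q.2 := by
  funext q
  simp only [mulVec, dotProduct, kroneckerMap_apply, Fintype.sum_prod_type, Finset.sum_mul_sum]
  exact Finset.sum_congr rfl fun _ _ => Finset.sum_congr rfl fun _ _ => by ring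

end KroneckerVec

theorem Matrix.IsSymm.mulVec_dotProduct {n R : Type*} [Fintype n] [CommSemiring R]
    {A : Matrix n n R} (hA : A.IsSymm) (u v : n → R) : (A *ᵥ u) ⬝ᵥ v = u ⬝ᵥ (A *ᵥ v) := by
  rw [dotProduct_mulVec, ← vecMul_transpose, hA.eq]

theorem dotProduct_mulVec_eq_ite_of_eigen {ι n R : Type*} [Fintype n] [DecidableEq ι]
    [CommSemiring R] {A : Matrix n n R} {v w : ι → n → R} {c : ι → R}
    (horth : ∀ i j, v i ⬝ᵥ w j = if i = j then 1 else 0) (heig : ∀ j, A *ᵥ v j = c j • w j)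
    (i j : ι) : v i ⬝ᵥ (A *ᵥ v j) = if i = j then c j else 0 := by
  rw [heig, dotProduct_smul, horth, smul_eq_mul]
  split_ifs <;> simp

section PriorPrecision

variable {nu nz : ℕ}

theorem kronRow_mulVec_kroneckerVec (Wu : Matrix (Fin nu) (Fin nu) ℝ) (v : Fin nz → ℝ)
    (x : Fin nu → ℝ) (w : Fin nz → ℝ) :
    kronRow Wu v *ᵥ (fun q => x q.1 * w q.2) = (v ⬝ᵥ w) • (Wu *ᵥ x) := by
  funext i
  simp only [mulVec, dotProduct, kronRow, of_apply, Pi.smul_apply, smul_eq_mul,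
    Fintype.sum_prod_type, Finset.sum_mul_sum]
  rw [Finset.sum_comm]
  exact Finset.sum_congr rfl fun _ _ => Finset.sum_congr rfl fun _ _ => by ring

theorem kronCol_mulVec (Wu : Matrix (Fin nu) (Fin nu) ℝ) (v : Fin nz → ℝ) (u : Fin nu → ℝ) :
    kronCol Wu v *ᵥ u = fun q => (Wu *ᵥ u) q.1 * v q.2 := by
  funext q
  simp only [mulVec, dotProduct, kronCol, of_apply, Finset.sum_mul]
  exact Finset.sum_congr rfl fun _ _ => by ring

theorem Wtheta_mulVec_sumElim (Wu : Matrix (Fin nu) (Fin nu) ℝ)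
    (Wz Mz : Matrix (Fin nz) (Fin nz) ℝ) (zt : Fin nz → ℝ) (b : ℝ) (x : Fin nu → ℝ)
    (w : Fin nz → ℝ) :
    Wtheta Wu Wz Mz zt *ᵥ Sum.elim (b • x) (fun q => x q.1 * w q.2) =
      Sum.elim ((b + (zt ᵥ* Mz) ⬝ᵥ w) • (Wu *ᵥ x))
        (fun q => (Wu *ᵥ x) q.1 * (Wz *ᵥ w + (b + (zt ᵥ* Mz) ⬝ᵥ w) • (Mz *ᵥ zt)) q.2) := by
  rw [Wtheta, fromBlocks_mulVec, Sum.elim_comp_inl, Sum.elim_comp_inr,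
    kronRow_mulVec_kroneckerVec, kronCol_mulVec, kronecker_mulVec_kroneckerVec, add_mulVec,
    vecMulVec_mulVec, op_smul_eq_smul, mulVec_smul]
  congr 1
  · rw [add_smul]
  · funext q
    simp only [Pi.add_apply, Pi.smul_apply, smul_eq_mul]
    ring

theorem sumElim_dotProduct_Wtheta_mulVec_sumElim (Wu : Matrix (Fin nu) (Fin nu) ℝ)
    (Wz Mz : Matrix (Fin nz) (Fin nz) ℝ) (zt : Fin nz → ℝ) (a b : ℝ) (x x' : Fin nu → ℝ)
    (w w' : Fin nz → ℝ) :
    Sum.elim (a • x) (fun q => x q.1 * w q.2) ⬝ᵥ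
        (Wtheta Wu Wz Mz zt *ᵥ Sum.elim (b • x') (fun q => x' q.1 * w' q.2)) =
      (x ⬝ᵥ (Wu *ᵥ x')) *
        ((a + w ⬝ᵥ (Mz *ᵥ zt)) * (b + (zt ᵥ* Mz) ⬝ᵥ w') + w ⬝ᵥ (Wz *ᵥ w')) := by
  rw [Wtheta_mulVec_sumElim, sumElim_dotProduct_sumElim, dotProduct_kroneckerVec,
    smul_dotProduct, dotProduct_smul, dotProduct_add, dotProduct_smul, smul_eq_mul, smul_eq_mul,
    smul_eq_mul]
  ring

theorem sumElim_dotProduct_Wtheta_mulVec_sumElim_inv (Wu : Matrix (Fin nu) (Fin nu) ℝ)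
    {Wz Mz : Matrix (Fin nz) (Fin nz) ℝ} (hMz : Mz.IsSymm) (hWz : Wz.IsSymm)
    (hWz_unit : IsUnit Wz.det) (zt : Fin nz → ℝ) (a b : ℝ) (x x' : Fin nu → ℝ)
    (y y' : Fin nz → ℝ) :
    Sum.elim (a • x) (fun q => x q.1 * (Wz⁻¹ *ᵥ (Mz *ᵥ y)) q.2) ⬝ᵥ
        (Wtheta Wu Wz Mz zt *ᵥ Sum.elim (b • x') (fun q => x' q.1 * (Wz⁻¹ *ᵥ (Mz *ᵥ y')) q.2)) =
      (x ⬝ᵥ (Wu *ᵥ x')) *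
        ((a + y ⬝ᵥ (Mz *ᵥ (Wz⁻¹ *ᵥ (Mz *ᵥ zt)))) * (b + y' ⬝ᵥ (Mz *ᵥ (Wz⁻¹ *ᵥ (Mz *ᵥ zt)))) +
          y ⬝ᵥ (Mz *ᵥ (Wz⁻¹ *ᵥ (Mz *ᵥ y')))) := by
  have hform : ∀ u v : Fin nz → ℝ,
      (Wz⁻¹ *ᵥ (Mz *ᵥ u)) ⬝ᵥ (Mz *ᵥ v) = u ⬝ᵥ (Mz *ᵥ (Wz⁻¹ *ᵥ (Mz *ᵥ v))) := fun u v => by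
    rw [hWz.inv.mulVec_dotProduct, hMz.mulVec_dotProduct]
  have hcancel : Wz *ᵥ (Wz⁻¹ *ᵥ (Mz *ᵥ y')) = Mz *ᵥ y' := by
    rw [mulVec_mulVec, mul_nonsing_inv _ hWz_unit, one_mulVec]
  have hrow : zt ᵥ* Mz = Mz *ᵥ zt := by rw [← vecMul_transpose, hMz.eq]
  rw [sumElim_dotProduct_Wtheta_mulVec_sumElim, hcancel, hrow, dotProduct_comm (Mz *ᵥ zt),
    hform, hform, hform]

end PriorPrecision

theorem Zmat_sub_const_mulVec {nz N : ℕ} (z : Fin N → Fin nz → ℝ) (zt : Fin nz → ℝ)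
    (g : Fin N → ℝ) :
    (Zmat z - of fun i (_ : Fin N) => zt i) *ᵥ g = Zmat z *ᵥ g - (∑ ℓ, g ℓ) • zt := by
  rw [sub_mulVec]
  congr 1
  funext i
  simp only [mulVec, dotProduct, of_apply, Pi.smul_apply, smul_eq_mul, ← Finset.mul_sum,
    mul_comm]

theorem dotProduct_Gmat_mulVec {nz N : ℕ} (Mz Wz : Matrix (Fin nz) (Fin nz) ℝ)
    (zt : Fin nz → ℝ) (z : Fin N → Fin nz → ℝ) (g g' : Fin N → ℝ) :
    g ⬝ᵥ (Gmat Mz Wz zt z *ᵥ g') =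
      (∑ ℓ, g ℓ) * (∑ ℓ, g' ℓ) +
        (Zmat z *ᵥ g - (∑ ℓ, g ℓ) • zt) ⬝ᵥ
          (Mz *ᵥ (Wz⁻¹ *ᵥ (Mz *ᵥ (Zmat z *ᵥ g' - (∑ ℓ, g' ℓ) • zt)))) := by
  rw [Gmat, add_mulVec, dotProduct_add, vecMulVec_mulVec, op_smul_eq_smul, dotProduct_smul,
    ← Zmat_sub_const_mulVec, ← Zmat_sub_const_mulVec, ← mulVec_mulVec, ← mulVec_mulVec,
    ← mulVec_mulVec, ← mulVec_mulVec, dotProduct_mulVec g, vecMul_transpose]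
  simp only [dotProduct, mul_one, one_mul, smul_eq_mul]
  ring

theorem right_singular_vectors_orthonormal_general
    {nu nz N : ℕ}
    (Mu Wu : Matrix (Fin nu) (Fin nu) ℝ) (Mz Wz : Matrix (Fin nz) (Fin nz) ℝ)
    (hMz : Mz.PosDef) (hWz : Wz.PosDef)
    (zt : Fin nz → ℝ) (z : Fin N → Fin nz → ℝ)
    (g : Fin N → Fin N → ℝ) (μ : Fin N → ℝ)
    (hgortho : ∀ i i', g i ⬝ᵥ g i' = if i = i' then 1 else 0)
    (hgeig : ∀ i, Gmat Mz Wz zt z *ᵥ g i = μ i • g i) (hμ : ∀ i, 0 < μ i)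
    (x : Fin nu → Fin nu → ℝ) (lam : Fin nu → ℝ)
    (hxortho : ∀ j j', x j ⬝ᵥ (Mu *ᵥ x j') = if j = j' then 1 else 0)
    (hxeig : ∀ j, Wu *ᵥ x j = lam j • (Mu *ᵥ x j)) (hlam : ∀ j, 0 < lam j)
    (y : Fin N → Fin nz → ℝ) (s : Fin N → ℝ)
    (hy : ∀ i, y i = Zmat z *ᵥ g i - (∑ ℓ, g i ℓ) • zt)
    (hs : ∀ i, s i = (∑ ℓ, g i ℓ) - (y i) ⬝ᵥ (Mz *ᵥ (Wz⁻¹ *ᵥ (Mz *ᵥ zt))))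
    (ψ : Fin N → Fin nu → (Fin nu ⊕ Fin nu × Fin nz) → ℝ)
    (hψ : ∀ i j, ψ i j = (1 / Real.sqrt (μ i * lam j)) •
      Sum.elim (s i • x j) (fun p => x j p.1 * (Wz⁻¹ *ᵥ (Mz *ᵥ y i)) p.2)) :
    ∀ (i i' : Fin N) (j j' : Fin nu),
      ψ i j ⬝ᵥ (Wtheta Wu Wz Mz zt *ᵥ ψ i' j')
        = if i = i' ∧ j = j' then 1 else 0 := by
  intro i i' j j'
  have hMz_symm : Mz.IsSymm := isHermitian_iff_isSymm.mp hMz.isHermitian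
  have hWz_symm : Wz.IsSymm := isHermitian_iff_isSymm.mp hWz.isHermitian
  have hWz_unit : IsUnit Wz.det := (isUnit_iff_isUnit_det _).mp hWz.isUnit
  have hsum : ∀ k, s k + y k ⬝ᵥ (Mz *ᵥ (Wz⁻¹ *ᵥ (Mz *ᵥ zt))) = ∑ ℓ, g k ℓ := fun k => by
    rw [hs, sub_add_cancel]
  have hG : ∀ k k', (∑ ℓ, g k ℓ) * (∑ ℓ, g k' ℓ) + y k ⬝ᵥ (Mz *ᵥ (Wz⁻¹ *ᵥ (Mz *ᵥ y k'))) =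
      if k = k' then μ k' else 0 := fun k k' => by
    rw [hy, hy, ← dotProduct_Gmat_mulVec, dotProduct_mulVec_eq_ite_of_eigen hgortho hgeig]
  rw [hψ, hψ, mulVec_smul, smul_dotProduct, dotProduct_smul,
    sumElim_dotProduct_Wtheta_mulVec_sumElim_inv Wu hMz_symm hWz_symm hWz_unit,
    hsum, hsum, hG, dotProduct_mulVec_eq_ite_of_eigen (w := fun j => Mu *ᵥ x j) hxortho hxeig,
    smul_eq_mul, smul_eq_mul]
  by_cases hij : i = i' ∧ j = j'
  · obtain ⟨rfl, rfl⟩ := hij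
    have ht : 0 < μ i * lam j := mul_pos (hμ i) (hlam j)
    simp only [and_self, if_true]
    field_simp
    rw [Real.sq_sqrt ht.le, mul_comm]
  · rw [if_neg hij]
    rcases not_and_or.mp hij with hi | hj
    · simp [hi]
    · simp [hj]

/-- The right generalized singular vectors
`ψ_{i,j} = (1/√(μ_i λ_j)) (s_i x_j ; x_j ⊗ Wz⁻¹ Mz y_i)` are `Wθ`-orthonormal. -/
theorem right_singular_vectors_orthonormal
    {nu nz N : ℕ}
    (Mu Wu : Matrix (Fin nu) (Fin nu) ℝ) (Mz Wz : Matrix (Fin nz) (Fin nz) ℝ)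
    (hMu : Mu.PosDef) (hWu : Wu.PosDef) (hMz : Mz.PosDef) (hWz : Wz.PosDef)
    (zt : Fin nz → ℝ) (z : Fin N → Fin nz → ℝ)
    (g : Fin N → Fin N → ℝ) (μ : Fin N → ℝ)
    (hgortho : ∀ i i', g i ⬝ᵥ g i' = if i = i' then 1 else 0)
    (hgeig : ∀ i, Gmat Mz Wz zt z *ᵥ g i = μ i • g i) (hμ : ∀ i, 0 < μ i)
    (x : Fin nu → Fin nu → ℝ) (lam : Fin nu → ℝ)
    (hxortho : ∀ j j', x j ⬝ᵥ (Mu *ᵥ x j') = if j = j' then 1 else 0)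
    (hxeig : ∀ j, Wu *ᵥ x j = lam j • (Mu *ᵥ x j)) (hlam : ∀ j, 0 < lam j)
    (y : Fin N → Fin nz → ℝ) (s : Fin N → ℝ)
    (hy : ∀ i, y i = Zmat z *ᵥ g i - (∑ ℓ, g i ℓ) • zt)
    (hs : ∀ i, s i = (∑ ℓ, g i ℓ) - (y i) ⬝ᵥ (Mz *ᵥ (Wz⁻¹ *ᵥ (Mz *ᵥ zt))))
    (ψ : Fin N → Fin nu → (Fin nu ⊕ Fin nu × Fin nz) → ℝ)
    (hψ : ∀ i j, ψ i j = (1 / Real.sqrt (μ i * lam j)) •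
      Sum.elim (s i • x j) (fun p => x j p.1 * (Wz⁻¹ *ᵥ (Mz *ᵥ y i)) p.2)) :
    ∀ (i i' : Fin N) (j j' : Fin nu),
      ψ i j ⬝ᵥ (Wtheta Wu Wz Mz zt *ᵥ ψ i' j')
        = if i = i' ∧ j = j' then 1 else 0 :=
  right_singular_vectors_orthonormal_general Mu Wu Mz Wz hMz hWz zt z g μ hgortho hgeig hμ x lam
    hxortho hxeig hlam y s hy hs ψ hψ
end
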